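/- Let K be a finite homogeneous simplicial 3-complex in ℝ³ that is strongly connected through 2-faces (for any two faces of cardinality 4 there is a chain of cardinality-4 faces in which consecutive faces intersect in a set of cardinality 3), and assume the vertex set V of K is in general position (every subset of at most 4 vertices is affinely independent). Let G be the 1-skeleton graph of K: the simple graph on V in which u and v are adjacent iff u ≠ v and {u, v} ∈ K.faces. Then the harmonic space of G with the inclusion of V into ℝ³ as position map has dimension exactly 6: Module.finrank ℝ Harm(G, incl) = 6. -/

import Mathlib

open scoped RealInnerProductSpace Matrix

/-- The harmonic space (global section space of the anisotropic sheaf / kernel of the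
ANM Hessian) of a simple graph `G` with positions `p`. -/
def Harm {V : Type*} (G : SimpleGraph V) (p : V → EuclideanSpace ℝ (Fin 3)) :
    Submodule ℝ (V → EuclideanSpace ℝ (Fin 3)) where
  carrier := {x | ∀ ⦃i j : V⦄, G.Adj i j → ⟪p j - p i, x j - x i⟫ = 0}
  add_mem' := by
    intro x y hx hy i j hij
    have h : (x + y) j - (x + y) i = (x j - x i) + (y j - y i) := by
      simp only [Pi.add_apply]; abel
    rw [h, inner_add_right, hx hij, hy hij, add_zero]
  zero_mem' := by
    intro i j hij
    simp
  smul_mem' := by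
    intro c x hx i j hij
    have h : (c • x) j - (c • x) i = c • (x j - x i) := by
      simp only [Pi.smul_apply, smul_sub]
    rw [h, inner_smul_right, hx hij, mul_zero]

namespace SkeletonHarmAux

abbrev E3 := EuclideanSpace ℝ (Fin 3)

noncomputable def cr (ω v : E3) : E3 := WithLp.toLp 2 (crossProduct ω v)

lemma cr_apply (a b : E3) : cr a b =
    (WithLp.toLp 2 ![a 1 * b 2 - a 2 * b 1, a 2 * b 0 - a 0 * b 2, a 0 * b 1 - a 1 * b 0] : E3) :=
  congrArg (WithLp.toLp 2) (cross_apply a b)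

lemma cr_add_left (ω ω' v : E3) : cr (ω + ω') v = cr ω v + cr ω' v := by
  simp only [cr, WithLp.ofLp_add, map_add, LinearMap.add_apply, WithLp.toLp_add]

lemma cr_smul_left (c : ℝ) (ω v : E3) : cr (c • ω) v = c • cr ω v := by
  simp only [cr, WithLp.ofLp_smul, map_smul, LinearMap.smul_apply, WithLp.toLp_smul]

lemma cr_sub_left (ω ω' v : E3) : cr (ω - ω') v = cr ω v - cr ω' v := by
  simp only [cr, WithLp.ofLp_sub, map_sub, LinearMap.sub_apply, WithLp.toLp_sub]

lemma cr_zero_left (v : E3) : cr 0 v = 0 := by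
  simp only [cr, WithLp.ofLp_zero, map_zero, LinearMap.zero_apply, WithLp.toLp_zero]

lemma cr_sub_right (ω u v : E3) : cr ω (u - v) = cr ω u - cr ω v := by
  simp only [cr, WithLp.ofLp_sub, map_sub, WithLp.toLp_sub]

lemma inner_cr_self (ω u : E3) : ⟪u, cr ω u⟫ = 0 := by
  have := dot_cross_self ω u
  simpa [cr, PiLp.inner_apply, dotProduct, mul_comm, Fin.sum_univ_three] using this

noncomputable def crL (ω : E3) : E3 →ₗ[ℝ] E3 :=
  (WithLp.linearEquiv 2 ℝ (Fin 3 → ℝ)).symm.toLinearMap ∘ₗ crossProduct ω ∘ₗ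
    (WithLp.linearEquiv 2 ℝ (Fin 3 → ℝ)).toLinearMap

lemma skew_eq_cross (A : E3 →ₗ[ℝ] E3)
    (hA : ∀ u v : E3, ⟪A u, v⟫ + ⟪u, A v⟫ = 0) :
    ∃ ω : E3, ∀ v, A v = cr ω v := by
  set s : Fin 3 → Fin 3 → ℝ := fun i j => A (EuclideanSpace.single j 1) i with hs
  have hskew : ∀ i j, s i j + s j i = 0 := by
    intro i j
    have := hA (EuclideanSpace.single j 1) (EuclideanSpace.single i 1)
    simpa [EuclideanSpace.inner_single_right, EuclideanSpace.inner_single_left, hs] using this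
  refine ⟨(WithLp.toLp 2 ![s 2 1, s 0 2, s 1 0] : E3), fun v => ?_⟩
  have hAB : A = crL (WithLp.toLp 2 ![s 2 1, s 0 2, s 1 0] : E3) := by
    apply (EuclideanSpace.basisFun (Fin 3) ℝ).toBasis.ext
    intro j
    have hb : (EuclideanSpace.basisFun (Fin 3) ℝ).toBasis j = EuclideanSpace.single j 1 :=
      EuclideanSpace.basisFun_apply _ _ _
    rw [hb]
    have hcr : crL (WithLp.toLp 2 ![s 2 1, s 0 2, s 1 0] : E3) (EuclideanSpace.single j 1)
        = cr (WithLp.toLp 2 ![s 2 1, s 0 2, s 1 0] : E3) (EuclideanSpace.single j 1) := rfl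
    rw [hcr, cr_apply]
    have h21 := hskew 2 1
    have h02 := hskew 0 2
    have h10 := hskew 1 0
    have h00 := hskew 0 0
    have h11 := hskew 1 1
    have h22 := hskew 2 2
    ext i
    fin_cases j <;> fin_cases i <;>
      simp [EuclideanSpace.single_apply, hs] <;> linarith
  rw [hAB]; rfl

lemma cr_eq_zero (ω u v : E3) (hu : cr ω u = 0) (hv : cr ω v = 0)
    (hind : LinearIndependent ℝ ![u, v]) : ω = 0 := by
  by_contra hω
  have extract : ∀ w : E3, cr ω w = 0 → ∃ a : ℝ, w = a • ω := by
    intro w hw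
    have hwω : crossProduct w ω = 0 := by
      rw [← cross_anticomm, show crossProduct ω w = 0 from congrArg WithLp.ofLp hw, neg_zero]
    have hni : ¬ LinearIndependent ℝ ![w, ω] := fun hli =>
      crossProduct_ne_zero_iff_linearIndependent.mpr (by
        have := hli.map' _ (WithLp.linearEquiv 2 ℝ (Fin 3 → ℝ)).ker
        have h : (⇑(WithLp.linearEquiv 2 ℝ (Fin 3 → ℝ)).toLinearMap ∘ ![w, ω])
            = ![w.ofLp, ω.ofLp] := by
          funext i
          fin_cases i <;> rfl
        rw [h] at this
        exact this) hwω
    rw [LinearIndependent.pair_iff] at hni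
    push_neg at hni
    obtain ⟨a, b, hab, hne⟩ := hni
    by_cases ha : a = 0
    · exfalso
      have hb : b ≠ 0 := hne ha
      rw [ha, zero_smul, zero_add, smul_eq_zero] at hab
      exact hω (hab.resolve_left hb)
    · have h1 : a • w = -(b • ω) := by rwa [add_eq_zero_iff_eq_neg] at hab
      have h2 : w = a⁻¹ • (a • w) := by rw [smul_smul, inv_mul_cancel₀ ha, one_smul]
      exact ⟨-(a⁻¹ * b), by rw [h2, h1, smul_neg, smul_smul, neg_smul]⟩
  obtain ⟨a, hu'⟩ := extract u hu
  obtain ⟨b, hv'⟩ := extract v hv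
  have hz : b • u + (-a) • v = 0 := by
    rw [hu', hv', smul_smul, smul_smul, ← add_smul, show b * a + -a * b = 0 by ring, zero_smul]
  have ha0 : a ≠ 0 := by
    intro h
    rw [h, zero_smul] at hu'
    have : (![u, v] : Fin 2 → E3) 0 ≠ 0 := hind.ne_zero 0
    simp [hu'] at this
  exact ha0 (neg_eq_zero.mp (LinearIndependent.pair_iff.mp hind b (-a) hz).2)

lemma tetra (p : Fin 4 → E3) (hp : AffineIndependent ℝ p) (x : Fin 4 → E3)
    (hx : ∀ i j, ⟪p j - p i, x j - x i⟫ = 0) :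
    ∃ ω b : E3, ∀ i, x i = cr ω (p i) + b := by
  have li : LinearIndependent ℝ (fun i : {i : Fin 4 // i ≠ 0} => p i.1 - p 0) := by
    have := (affineIndependent_iff_linearIndependent_vsub ℝ p 0).mp hp
    simpa [vsub_eq_sub] using this
  have hcard : Fintype.card {i : Fin 4 // i ≠ 0} = 3 := by
    simp [Fintype.card_subtype_compl]
  have hrank : Fintype.card {i : Fin 4 // i ≠ 0} = Module.finrank ℝ E3 := by
    rw [hcard, finrank_euclideanSpace_fin]
  haveI : Nonempty {i : Fin 4 // i ≠ 0} := ⟨⟨1, by decide⟩⟩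
  set B := basisOfLinearIndependentOfCardEqFinrank li hrank with hB
  have hBapp : ∀ i, B i = p i.1 - p 0 := fun i => by
    rw [hB, coe_basisOfLinearIndependentOfCardEqFinrank]
  set A := B.constr ℝ (fun i => x i.1 - x 0) with hA
  have hAapp : ∀ i : {i : Fin 4 // i ≠ 0}, A (p i.1 - p 0) = x i.1 - x 0 := by
    intro i
    rw [← hBapp i, hA, Module.Basis.constr_basis]
  have skew : ∀ u v : E3, ⟪A u, v⟫ + ⟪u, A v⟫ = 0 := by
    set F : E3 →ₗ[ℝ] E3 →ₗ[ℝ] ℝ := LinearMap.mk₂ ℝ (fun u v => ⟪A u, v⟫ + ⟪u, A v⟫)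
      (fun u u' v => by
        show ⟪A (u + u'), v⟫ + ⟪u + u', A v⟫ = (⟪A u, v⟫ + ⟪u, A v⟫) + (⟪A u', v⟫ + ⟪u', A v⟫)
        rw [map_add, inner_add_left, inner_add_left]; ring)
      (fun c u v => by
        show ⟪A (c • u), v⟫ + ⟪c • u, A v⟫ = c • (⟪A u, v⟫ + ⟪u, A v⟫)
        rw [map_smul, real_inner_smul_left, real_inner_smul_left, smul_eq_mul]; ring)
      (fun u v v' => by
        show ⟪A u, v + v'⟫ + ⟪u, A (v + v')⟫ = (⟪A u, v⟫ + ⟪u, A v⟫) + (⟪A u, v'⟫ + ⟪u, A v'⟫)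
        rw [map_add, inner_add_right, inner_add_right]; ring)
      (fun c u v => by
        show ⟪A u, c • v⟫ + ⟪u, A (c • v)⟫ = c • (⟪A u, v⟫ + ⟪u, A v⟫)
        rw [map_smul, real_inner_smul_right, real_inner_smul_right, smul_eq_mul]; ring) with hF
    have hF0 : F = 0 := by
      apply B.ext
      intro i
      apply B.ext
      intro j
      have e1 := hx 0 i.1
      have e2 := hx 0 j.1
      have e3 := hx i.1 j.1
      have hps : p j.1 - p i.1 = (p j.1 - p 0) - (p i.1 - p 0) := by abel
      have hxs : x j.1 - x i.1 = (x j.1 - x 0) - (x i.1 - x 0) := by abel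
      rw [hps, hxs] at e3
      simp only [hF, LinearMap.mk₂_apply, LinearMap.zero_apply]
      rw [hBapp i, hBapp j, hAapp i, hAapp j]
      simp only [inner_sub_left, inner_sub_right] at e1 e2 e3 ⊢
      have c1 := real_inner_comm (x i.1) (p j.1)
      have c2 := real_inner_comm (x i.1) (p 0)
      have c3 := real_inner_comm (x 0) (p j.1)
      have c4 := real_inner_comm (x 0) (p 0)
      linarith
    intro u v
    have h1 := congrArg (fun f => f u) hF0
    exact congrArg (fun f => f v) h1
  obtain ⟨ω, hω⟩ := skew_eq_cross A skew
  refine ⟨ω, x 0 - cr ω (p 0), fun i => ?_⟩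
  by_cases hi : i = 0
  · rw [hi]; abel
  · have h1 := hAapp ⟨i, hi⟩
    rw [hω] at h1
    have h2 : cr ω (p i - p 0) = cr ω (p i) - cr ω (p 0) := cr_sub_right _ _ _
    rw [h2] at h1
    have : x i - x 0 = cr ω (p i) - cr ω (p 0) := h1.symm
    rw [sub_eq_iff_eq_add] at this
    rw [this]; abel

lemma tri_unique (q : Fin 3 → E3) (hq : AffineIndependent ℝ q) (ω b ω' b' : E3)
    (h : ∀ i, cr ω (q i) + b = cr ω' (q i) + b') : ω = ω' ∧ b = b' := by
  have e : ∀ i : Fin 3, cr ω (q i) - cr ω' (q i) = b' - b := by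
    intro i
    rw [sub_eq_sub_iff_add_eq_add, h i, add_comm]
  have hdiff : ∀ i : Fin 3, cr (ω - ω') (q i - q 0) = 0 := by
    intro i
    rw [cr_sub_left, cr_sub_right, cr_sub_right, sub_sub_sub_comm, e i, e 0, sub_self]
  have li0 : LinearIndependent ℝ (fun i : {x : Fin 3 // x ≠ 0} => q i.1 - q 0) := by
    have := (affineIndependent_iff_linearIndependent_vsub ℝ q 0).mp hq
    simpa [vsub_eq_sub] using this
  have ginj : Function.Injective
      (![⟨1, by decide⟩, ⟨2, by decide⟩] : Fin 2 → {x : Fin 3 // x ≠ 0}) := by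
    intro a b hab
    fin_cases a <;> fin_cases b <;> simp_all <;> rfl
  have li : LinearIndependent ℝ ![q 1 - q 0, q 2 - q 0] := by
    have := li0.comp _ ginj
    convert this using 1
    funext i
    fin_cases i <;> rfl
  have hω : ω - ω' = 0 := cr_eq_zero _ _ _ (hdiff 1) (hdiff 2) li
  have hωe : ω = ω' := sub_eq_zero.mp hω
  refine ⟨hωe, ?_⟩
  have := h 0
  rw [hωe] at this
  exact add_left_cancel this

lemma enumFinset {α : Type*} (τ : Finset α) (k : ℕ) (hc : τ.card = k) :
    ∃ p : Fin k → α, Function.Injective p ∧ (∀ i, p i ∈ τ) ∧ ∀ v ∈ τ, ∃ i, p i = v := by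
  have e : Fin k ≃ {x // x ∈ τ} := (finCongr hc.symm).trans τ.equivFin.symm
  refine ⟨fun i => (e i).1, ?_, fun i => (e i).2, fun v hv => ?_⟩
  · intro a b hab
    exact e.injective (Subtype.ext hab)
  · obtain ⟨i, hi⟩ := e.surjective ⟨v, hv⟩
    exact ⟨i, congrArg Subtype.val hi⟩

lemma affine_fin {S : Finset E3} {n : ℕ}
    (h : AffineIndependent ℝ (fun x : {y : E3 // y ∈ S} => x.1))
    (p : Fin n → E3) (hp : ∀ i, p i ∈ S) (hinj : Function.Injective p) :
    AffineIndependent ℝ p :=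
  h.comp_embedding
    (⟨fun i => (⟨p i, hp i⟩ : {y : E3 // y ∈ S}),
      fun a b hab => hinj (congrArg Subtype.val hab)⟩ : Fin n ↪ {y : E3 // y ∈ S})

end SkeletonHarmAux

open SkeletonHarmAux

/-- For a nonempty finite homogeneous simplicial 3-complex in `ℝ³` that is strongly
connected through 2-faces and whose vertex set is in general position, the harmonic space
of its 1-skeleton graph has dimension exactly `6`. -/
theorem skeleton_harm_dim_eq_six
    [DecidableEq (EuclideanSpace ℝ (Fin 3))]
    (K : Geometry.SimplicialComplex ℝ (EuclideanSpace ℝ (Fin 3)))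
    (hfin : K.faces.Finite) (hne : K.faces.Nonempty)
    (hhom : ∀ s ∈ K.faces, ∃ t ∈ K.faces, t.card = 4 ∧ s ⊆ t)
    (hconn : ∀ τ ρ : Finset (EuclideanSpace ℝ (Fin 3)),
      τ ∈ K.faces → ρ ∈ K.faces → τ.card = 4 → ρ.card = 4 →
      ∃ (m : ℕ) (σ : Fin (m + 1) → Finset (EuclideanSpace ℝ (Fin 3))),
        σ 0 = τ ∧ σ (Fin.last m) = ρ ∧
        (∀ i, σ i ∈ K.faces ∧ (σ i).card = 4) ∧
        (∀ i : Fin m, (σ i.castSucc ∩ σ i.succ).card = 3))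
    (hgen : ∀ S : Finset (EuclideanSpace ℝ (Fin 3)), ↑S ⊆ K.vertices → S.card ≤ 4 →
      AffineIndependent ℝ (fun x : {y : EuclideanSpace ℝ (Fin 3) // y ∈ S} => x.1))
    (G : SimpleGraph K.vertices)
    (hG : ∀ u v : K.vertices, G.Adj u v ↔
      u ≠ v ∧ ({u.1, v.1} : Finset (EuclideanSpace ℝ (Fin 3))) ∈ K.faces) :
    Module.finrank ℝ (Harm G (fun x => x.1)) = 6 := by
  classical
  obtain ⟨s₀, hs₀⟩ := hne
  obtain ⟨τ₀, hτ₀, hc₀, -⟩ := hhom s₀ hs₀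
  have facevert : ∀ {τ : Finset E3}, τ ∈ K.faces → ∀ {v}, v ∈ τ → v ∈ K.vertices := by
    intro τ hτ v hv
    exact K.down_closed hτ (Finset.singleton_subset_iff.mpr hv) (by simp)
  -- the linear map from (angular velocity, translation) pairs to motions
  let T : (E3 × E3) →ₗ[ℝ] (K.vertices → E3) :=
    { toFun := fun z => fun v => cr z.1 v.1 + z.2
      map_add' := by
        intro z w
        funext v
        show cr (z.1 + w.1) v.1 + (z.2 + w.2) = (cr z.1 v.1 + z.2) + (cr w.1 v.1 + w.2)
        rw [cr_add_left]; abel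
      map_smul' := by
        intro c z
        funext v
        show cr (c • z.1) v.1 + c • z.2 = c • (cr z.1 v.1 + z.2)
        rw [cr_smul_left, smul_add] }
  have hT_mem : ∀ z : E3 × E3, T z ∈ Harm G (fun x => x.1) := by
    intro z i j hij
    show ⟪j.1 - i.1, (cr z.1 j.1 + z.2) - (cr z.1 i.1 + z.2)⟫ = 0
    have h1 : (cr z.1 j.1 + z.2) - (cr z.1 i.1 + z.2) = cr z.1 (j.1 - i.1) := by
      rw [cr_sub_right]; abel
    rw [h1, inner_cr_self]
  let T' : (E3 × E3) →ₗ[ℝ] Harm G (fun x => x.1) := T.codRestrict _ hT_mem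
  -- enumerate the base 4-face
  obtain ⟨P, hPinj, hPmem, hPsurj⟩ := enumFinset τ₀ 4 hc₀
  have hτ₀vert : ↑τ₀ ⊆ K.vertices := fun v hv => facevert hτ₀ hv
  have hPaff : AffineIndependent ℝ P :=
    affine_fin (hgen τ₀ hτ₀vert (le_of_eq hc₀)) P hPmem hPinj
  have hQaff : AffineIndependent ℝ (P ∘ Fin.castSucc) :=
    hPaff.comp_embedding ⟨Fin.castSucc, Fin.castSucc_injective _⟩
  -- injectivity
  have hinj : Function.Injective T' := by
    rw [injective_iff_map_eq_zero]
    intro z hz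
    have hz' : ∀ v : K.vertices, cr z.1 v.1 + z.2 = 0 := by
      intro v
      have h1 : (T' z).1 = (0 : Harm G (fun x => x.1)).1 := congrArg Subtype.val hz
      exact congrFun h1 v
    have h3 : ∀ i : Fin 3, cr z.1 ((P ∘ Fin.castSucc) i) + z.2
        = cr 0 ((P ∘ Fin.castSucc) i) + 0 := by
      intro i
      rw [cr_zero_left, add_zero]
      exact hz' ⟨P (Fin.castSucc i), facevert hτ₀ (hPmem _)⟩
    obtain ⟨hω, hb⟩ := tri_unique (P ∘ Fin.castSucc) hQaff z.1 z.2 0 0 h3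
    exact Prod.ext hω hb
  -- surjectivity
  have hsurj : Function.Surjective T' := by
    rintro ⟨x, hx⟩
    have hx' : ∀ ⦃i j : K.vertices⦄, G.Adj i j → ⟪j.1 - i.1, x j - x i⟫ = 0 := hx
    set y : E3 → E3 := fun v => if h : v ∈ K.vertices then x ⟨v, h⟩ else 0 with hy
    have key : ∀ τ ∈ K.faces, τ.card = 4 → ∃ ω b : E3, ∀ v ∈ τ, y v = cr ω v + b := by
      intro τ hτ hc
      obtain ⟨p, hpinj, hpmem, hpsurj⟩ := enumFinset τ 4 hc
      have hpaff : AffineIndependent ℝ p :=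
        affine_fin (hgen τ (fun v hv => facevert hτ hv) (le_of_eq hc)) p hpmem hpinj
      have hcons : ∀ i j : Fin 4, ⟪p j - p i, y (p j) - y (p i)⟫ = 0 := by
        intro i j
        by_cases hij : i = j
        · subst hij; simp
        · have hne' : p i ≠ p j := fun h => hij (hpinj h)
          have hmem2 : ({p i, p j} : Finset E3) ∈ K.faces := by
            refine K.down_closed hτ ?_ (by simp)
            intro a ha
            rcases Finset.mem_insert.mp ha with h | h
            · rw [h]; exact hpmem i
            · rw [Finset.mem_singleton.mp h]; exact hpmem j
          have hvi : p i ∈ K.vertices := facevert hτ (hpmem i)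
          have hvj : p j ∈ K.vertices := facevert hτ (hpmem j)
          have hadj : G.Adj ⟨p i, hvi⟩ ⟨p j, hvj⟩ :=
            (hG _ _).mpr ⟨fun h => hne' (congrArg Subtype.val h), hmem2⟩
          have h1 := hx' hadj
          have hyi : y (p i) = x ⟨p i, hvi⟩ := by rw [hy]; exact dif_pos hvi
          have hyj : y (p j) = x ⟨p j, hvj⟩ := by rw [hy]; exact dif_pos hvj
          rw [hyi, hyj]
          exact h1
      obtain ⟨ω, b, hwb⟩ := tetra p hpaff (fun i => y (p i)) hcons
      refine ⟨ω, b, fun v hv => ?_⟩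
      obtain ⟨i, rfl⟩ := hpsurj v hv
      exact hwb i
    choose ω b hωb using key
    set ω₀ := ω τ₀ hτ₀ hc₀ with hω₀
    set b₀ := b τ₀ hτ₀ hc₀ with hb₀
    have spread : ∀ τ (hτ : τ ∈ K.faces) (hc : τ.card = 4), ∀ v ∈ τ, y v = cr ω₀ v + b₀ := by
      intro τ hτ hc
      obtain ⟨m, σ, hσ0, hσl, hσf, hσi⟩ := hconn τ₀ τ hτ₀ hτ hc₀ hc
      have Q : ∀ i : Fin (m+1), ∀ v ∈ σ i, y v = cr ω₀ v + b₀ := by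
        intro i
        induction i using Fin.induction with
        | zero =>
          rw [hσ0]
          exact hωb τ₀ hτ₀ hc₀
        | succ i ih =>
          intro v hv
          have hρc : (σ i.castSucc ∩ σ i.succ).card = 3 := hσi i
          obtain ⟨q, hqinj, hqmem, hqsurj⟩ := enumFinset (σ i.castSucc ∩ σ i.succ) 3 hρc
          have hρsub1 : σ i.castSucc ∩ σ i.succ ⊆ σ i.castSucc := Finset.inter_subset_left
          have hρsub2 : σ i.castSucc ∩ σ i.succ ⊆ σ i.succ := Finset.inter_subset_right
          have hρvert : ↑(σ i.castSucc ∩ σ i.succ) ⊆ K.vertices :=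
            fun w hw => facevert (hσf i.succ).1 (hρsub2 hw)
          have hqaff : AffineIndependent ℝ q :=
            affine_fin (hgen _ hρvert (by rw [hρc]; norm_num)) q hqmem hqinj
          have heq : ∀ j : Fin 3,
              cr (ω (σ i.succ) (hσf i.succ).1 (hσf i.succ).2) (q j)
                + b (σ i.succ) (hσf i.succ).1 (hσf i.succ).2 = cr ω₀ (q j) + b₀ := by
            intro j
            rw [← hωb (σ i.succ) (hσf i.succ).1 (hσf i.succ).2 (q j) (hρsub2 (hqmem j))]
            exact ih (q j) (hρsub1 (hqmem j))
          obtain ⟨hωe, hbe⟩ := tri_unique q hqaff _ _ _ _ heq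
          rw [← hωe, ← hbe]
          exact hωb (σ i.succ) (hσf i.succ).1 (hσf i.succ).2 v hv
      have h1 := Q (Fin.last m)
      rw [hσl] at h1
      exact h1
    refine ⟨(ω₀, b₀), ?_⟩
    apply Subtype.ext
    funext v
    show cr ω₀ v.1 + b₀ = x v
    have hv1 : ({v.1} : Finset E3) ∈ K.faces := v.2
    obtain ⟨τ, hτ, hc, hsub⟩ := hhom {v.1} hv1
    have h1 := spread τ hτ hc v.1 (hsub (Finset.mem_singleton_self _))
    have h2 : y v.1 = x v := by
      simp only [hy]
      rw [dif_pos v.2]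
    rw [← h1, h2]
  have equiv := LinearEquiv.ofBijective T' ⟨hinj, hsurj⟩
  have h6 : Module.finrank ℝ (E3 × E3) = 6 := by
    rw [Module.finrank_prod]
    norm_num [finrank_euclideanSpace_fin]
  rw [← equiv.finrank_eq, h6]
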